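/- Let T ⊂ ℝ² be a triangle in standard position (d = 2) satisfying Condition 1. Then (1/2)·H_{T₀} < H_T < 2·H_{T₀}, where H_T := (α₁α₂/|T|)·h_T and H_{T₀} := (h_T²/|T|)·min_i |L_i| is computed from the edge lengths L_i, the diameter h_T, and the area |T| of T. -/

import Mathlib

/-!
The two quantities share the factor `α₂ / |T|`: since `α₂ ≤ α₁ ≤ h_T`, the shortest edge is
`α₂`, so `H_T / H_{T₀} = α₁ / h_T`. The claim is thus `h_T / 2 < α₁ < 2 h_T`. The upper bound is
`α₁ ≤ h_T`, and the lower one is the strict triangle inequality `h_T < α₁ + α₂ ≤ 2 α₁`, strict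
because `t > 0`; the same nondegeneracy makes `|T| > 0`.
-/

open MeasureTheory ENNReal

noncomputable section

abbrev Euc (d : ℕ) : Type := EuclideanSpace ℝ (Fin d)

def vec2 (a b : ℝ) : Euc 2 := (WithLp.equiv 2 (Fin 2 → ℝ)).symm ![a, b]

@[simp] lemma vec2_apply_zero (a b : ℝ) : vec2 a b 0 = a := rfl

@[simp] lemma vec2_apply_one (a b : ℝ) : vec2 a b 1 = b := rfl

lemma vec2_zero_zero : vec2 0 0 = 0 := by
  ext i; fin_cases i <;> rfl

lemma dist_vec2 (a b c d : ℝ) : dist (vec2 a b) (vec2 c d) = √((a - c) ^ 2 + (b - d) ^ 2) := by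
  simp [EuclideanSpace.dist_eq, Fin.sum_univ_two, Real.dist_eq, sq_abs]

lemma linearIndependent_vec2_pair {a b c d : ℝ} (h : a * d - b * c ≠ 0) :
    LinearIndependent ℝ ![vec2 a b, vec2 c d] := by
  rw [LinearIndependent.pair_iff]
  intro x y hxy
  have h0 : x * a + y * c = 0 := by simpa using congrArg (· 0) hxy
  have h1 : x * b + y * d = 0 := by simpa using congrArg (· 1) hxy
  constructor
  · apply mul_left_cancel₀ h; linear_combination d * h0 - c * h1
  · apply mul_left_cancel₀ h; linear_combination a * h1 - b * h0

lemma affineSpan_insert_zero_pair_eq_top {V : Type*} [AddCommGroup V] [Module ℝ V]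
    [FiniteDimensional ℝ V] (hV : Module.finrank ℝ V = 2) {u v : V}
    (h : LinearIndependent ℝ ![u, v]) : affineSpan ℝ {0, u, v} = ⊤ := by
  rw [AffineSubspace.affineSpan_eq_top_iff_vectorSpan_eq_top_of_nonempty ℝ V V
    ⟨0, Set.mem_insert _ _⟩, eq_top_iff, ← h.span_eq_top_of_card_eq_finrank (by simp [hV]),
    Submodule.span_le, Matrix.range_cons_cons_empty]
  rintro w (rfl | rfl)
  · simpa using vsub_mem_vectorSpan ℝ (by simp : w ∈ ({0, w, v} : Set V)) (Set.mem_insert 0 _)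
  · simpa using vsub_mem_vectorSpan ℝ (by simp : w ∈ ({0, u, w} : Set V)) (Set.mem_insert 0 _)

lemma toReal_measure_convexHull_pos {E : Type*} [NormedAddCommGroup E] [NormedSpace ℝ E]
    [FiniteDimensional ℝ E] [MeasurableSpace E] [BorelSpace E] (μ : Measure E)
    [μ.IsAddHaarMeasure] {s : Set E} (hs : s.Finite) (h : affineSpan ℝ s = ⊤) :
    0 < (μ (convexHull ℝ s)).toReal := by
  have hint : (interior (convexHull ℝ s)).Nonempty :=
    interior_convexHull_nonempty_iff_affineSpan_eq_top.2 h
  refine ENNReal.toReal_pos ?_ ((hs.isCompact_convexHull (𝕜 := ℝ)).measure_lt_top).ne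
  exact (lt_of_lt_of_le (isOpen_interior.measure_pos μ hint)
    (measure_mono interior_subset)).ne'

lemma half_mul_lt_and_lt_two_mul {a h v m : ℝ} (hv : 0 < v) (hm : 0 < m)
    (h₁ : h < 2 * a) (h₂ : a < 2 * h) :
    1 / 2 * (h ^ 2 / v * m) < a * m / v * h ∧ a * m / v * h < 2 * (h ^ 2 / v * m) := by
  have hh : 0 < h := by linarith
  have hmv : 0 < m / v := div_pos hm hv
  rw [show a * m / v * h = a * h * (m / v) by ring, show h ^ 2 / v * m = h * h * (m / v) by ring]
  constructor <;> nlinarith [mul_pos hh hmv]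

section StandardPosition

variable {α₁ α₂ s t : ℝ}

lemma dist_zero_vec2_of_pos (hα₁ : 0 < α₁) : dist 0 (vec2 α₁ 0) = α₁ := by
  rw [← vec2_zero_zero, dist_vec2]
  simpa using Real.sqrt_sq hα₁.le

lemma dist_zero_vec2_polar (hα₂ : 0 < α₂) (hst : s ^ 2 + t ^ 2 = 1) :
    dist 0 (vec2 (α₂ * s) (α₂ * t)) = α₂ := by
  rw [← vec2_zero_zero, dist_vec2,
    show (0 - α₂ * s) ^ 2 + (0 - α₂ * t) ^ 2 = α₂ ^ 2 by linear_combination α₂ ^ 2 * hst]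
  exact Real.sqrt_sq hα₂.le

/-- Strict because `t > 0` forces `s > -1`. -/
lemma dist_vec2_polar_lt_add (hα₁ : 0 < α₁) (hα₂ : 0 < α₂) (hst : s ^ 2 + t ^ 2 = 1)
    (ht : 0 < t) : dist (vec2 α₁ 0) (vec2 (α₂ * s) (α₂ * t)) < α₁ + α₂ := by
  have hs : -1 < s := by nlinarith
  rw [dist_vec2, Real.sqrt_lt' (by positivity),
    show (α₁ - α₂ * s) ^ 2 + (0 - α₂ * t) ^ 2 = (α₁ + α₂) ^ 2 - 2 * α₁ * α₂ * (1 + s) by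
      linear_combination α₂ ^ 2 * hst]
  have hgap : 0 < 2 * α₁ * α₂ * (1 + s) := by nlinarith [mul_pos hα₁ hα₂]
  linarith

lemma affineSpan_standardTriangle_eq_top (hα₁ : 0 < α₁) (hα₂ : 0 < α₂) (ht : 0 < t) :
    affineSpan ℝ {0, vec2 α₁ 0, vec2 (α₂ * s) (α₂ * t)} = ⊤ :=
  affineSpan_insert_zero_pair_eq_top finrank_euclideanSpace_fin
    (linearIndependent_vec2_pair (by simp only [zero_mul, sub_zero]; positivity))

end StandardPosition

/-- for a triangle `T` in standard position (vertices `x₁ = (0,0)`,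
`x₂ = (α₁,0)`, `x₃ = (α₂ s, α₂ t)` with `s² + t² = 1`, `t > 0`, `α₁, α₂ > 0`)
satisfying Condition 1 (the edge `x₂x₃` is the longest edge, so `h_T = |x₂ − x₃|`,
and `α₂ ≤ α₁`), one has `(1/2)·H_{T₀} < H_T < 2·H_{T₀}`, where
`H_T = (α₁α₂/|T|)·h_T` and `H_{T₀} = (h_T²/|T|)·min_i |L_i|`. -/
theorem stmt_2 (α₁ α₂ s t : ℝ) (hα₁ : 0 < α₁) (hα₂ : 0 < α₂)
    (hst : s ^ 2 + t ^ 2 = 1) (ht : 0 < t) :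
    ∀ x₁ x₂ x₃ : Euc 2, x₁ = 0 → x₂ = vec2 α₁ 0 → x₃ = vec2 (α₂ * s) (α₂ * t) →
    -- Condition 1: `x₂x₃` is the longest edge and `α₂ ≤ α₁`
    dist x₁ x₂ ≤ dist x₂ x₃ → dist x₁ x₃ ≤ dist x₂ x₃ → α₂ ≤ α₁ →
    ∀ T : Set (Euc 2), T = convexHull ℝ {x₁, x₂, x₃} →
    ∀ hT HT HT₀ : ℝ,
      hT = dist x₂ x₃ →
      HT = α₁ * α₂ / (volume T).toReal * hT →
      HT₀ = hT ^ 2 / (volume T).toReal * min (dist x₁ x₂) (min (dist x₁ x₃) (dist x₂ x₃)) →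
      (1 / 2) * HT₀ < HT ∧ HT < 2 * HT₀ := by
  rintro x₁ x₂ x₃ rfl rfl rfl h₁₂ h₁₃ hα T rfl hT HT HT₀ rfl rfl rfl
  rw [dist_zero_vec2_of_pos hα₁] at h₁₂ ⊢
  rw [dist_zero_vec2_polar hα₂ hst] at h₁₃ ⊢
  rw [min_eq_left h₁₃, min_eq_right hα]
  have hvol := toReal_measure_convexHull_pos volume (Set.toFinite _)
    (affineSpan_standardTriangle_eq_top (s := s) hα₁ hα₂ ht)
  have hlt := dist_vec2_polar_lt_add hα₁ hα₂ hst ht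
  exact half_mul_lt_and_lt_two_mul hvol hα₂ (by linarith) (by linarith)
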